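/- The ring ℤ[i,φ] is norm-Euclidean: for every α ∈ K = ℚ(i,√5) there exists β ∈ ℤ[i,φ] such that |N_{K/ℚ}(α − β)| < 1. In particular, ℤ[i,φ] is a Euclidean domain with respect to the Euclidean function α ↦ |N_{K/ℚ}(α)|. -/

import Mathlib

/-!
Write `α = (a + bφ) + (c + dφ)i`. Its norm down to `ℚ(φ)` is `(a + bφ)² + (c + dφ)² = u + vφ`
with `u = a² + b² + c² + d²`, `v = 2ab + b² + 2cd + d²`, so `N(α) = u² + uv - v² = u² - v(v - u)`,
which is `≥ 0` as a product of two sums of squares. Round the coordinates into `[-1/2, 1/2]` and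
use `α ↦ ±α`, `α ↦ ᾱ`, `α ↦ iα` to normalise signs. If some coordinate is below `3/8` in absolute
value, then `u < 57/64` and `4N = 5u² - (2v - u)² ≤ 5u² < 4`. Otherwise `v` and `v - u` have the
same sign, so `N < u² ≤ 1`, except when the signs of `a, c` differ; then shifting `d` by `1` makes
`v - u ≥ 1/4` while `u ≤ 23/20`, which is again enough.
-/

/-- `K = ℚ(i, √5)` as an intermediate field of `ℂ/ℚ`. -/
noncomputable def K : IntermediateField ℚ ℂ :=
  IntermediateField.adjoin ℚ {Complex.I, (Real.sqrt 5 : ℂ)}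

/-- `i` as an element of `K`. -/
noncomputable def iK : K := ⟨Complex.I, IntermediateField.subset_adjoin ℚ _ (by simp)⟩

/-- `√5` as an element of `K`. -/
noncomputable def sqrt5K : K := ⟨(Real.sqrt 5 : ℂ), IntermediateField.subset_adjoin ℚ _ (by simp)⟩

/-- The golden ratio `φ = (1 + √5)/2` as an element of `K`. -/
noncomputable def phiK : K := (1 + sqrt5K) / 2

/-- `ℤ[i,φ]`, the subring of `K` generated by `i` and `φ`
(equivalently, the `ℤ`-span of `{1, φ, i, iφ}`). -/
noncomputable def Ziphi : Subring K := Subring.closure {iK, phiK}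

open Real Complex
open scoped goldenRatio

def goldenNorm (u v : ℚ) : ℚ := u ^ 2 + u * v - v ^ 2

def normForm (a b c d : ℚ) : ℚ :=
  goldenNorm (a ^ 2 + b ^ 2 + c ^ 2 + d ^ 2) (2 * a * b + b ^ 2 + 2 * c * d + d ^ 2)

lemma goldenNorm_cast (u v : ℚ) : (goldenNorm u v : ℝ) = (u + v * φ) * (u + v * ψ) := by
  unfold goldenNorm
  push_cast
  linear_combination (-(u : ℝ) * v) * goldenRatio_add_goldenConj -
    (v : ℝ) ^ 2 * goldenRatio_mul_goldenConj

lemma add_mul_sq_add_add_mul_sq {t : ℝ} (ht : t ^ 2 = t + 1) (a b c d : ℝ) :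
    (a + b * t) ^ 2 + (c + d * t) ^ 2 =
      (a ^ 2 + b ^ 2 + c ^ 2 + d ^ 2) + (2 * a * b + b ^ 2 + 2 * c * d + d ^ 2) * t := by
  linear_combination (b ^ 2 + d ^ 2) * ht

lemma normForm_nonneg (a b c d : ℚ) : 0 ≤ normForm a b c d := by
  have h : (normForm a b c d : ℝ) =
      ((a + b * φ) ^ 2 + (c + d * φ) ^ 2) * ((a + b * ψ) ^ 2 + (c + d * ψ) ^ 2) := by
    rw [normForm, goldenNorm_cast, add_mul_sq_add_add_mul_sq goldenRatio_sq,
      add_mul_sq_add_add_mul_sq goldenConj_sq]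
    push_cast
    ring
  rw [← Rat.cast_nonneg (K := ℝ), h]
  positivity

lemma normForm_neg_neg_left (a b c d : ℚ) : normForm (-a) (-b) c d = normForm a b c d := by
  unfold normForm goldenNorm; ring

lemma normForm_neg_neg_right (a b c d : ℚ) : normForm a b (-c) (-d) = normForm a b c d := by
  unfold normForm goldenNorm; ring

lemma normForm_swap (a b c d : ℚ) : normForm c d a b = normForm a b c d := by
  unfold normForm goldenNorm; ring

lemma goldenNorm_lt_one_of_sq_lt {u : ℚ} (v : ℚ) (hu : 5 * u ^ 2 < 4) : goldenNorm u v < 1 := by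
  unfold goldenNorm; nlinarith [sq_nonneg (2 * v - u)]

lemma goldenNorm_lt_one_of_mul_pos {u v : ℚ} (hu : u ^ 2 ≤ 1) (huv : 0 < v * (v - u)) :
    goldenNorm u v < 1 := by
  unfold goldenNorm; nlinarith

lemma goldenNorm_lt_one_of_le {u v : ℚ} (hu₀ : 0 ≤ u) (hu : u ≤ 23 / 20) (huv : 1 / 4 ≤ v - u) :
    goldenNorm u v < 1 := by
  unfold goldenNorm; nlinarith

lemma normForm_lt_one_of_sum_sq_lt {a b c d : ℚ} (h : a ^ 2 + b ^ 2 + c ^ 2 + d ^ 2 < 57 / 64) :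
    normForm a b c d < 1 :=
  goldenNorm_lt_one_of_sq_lt _ (by nlinarith [sq_nonneg a, sq_nonneg b, sq_nonneg c, sq_nonneg d])

lemma normForm_lt_one_of_pos {a b c d : ℚ} (ha : 0 < a) (hab : a < 2 * b) (hc : 0 < c)
    (hcd : c < 2 * d) (h : a ^ 2 + b ^ 2 + c ^ 2 + d ^ 2 ≤ 1) : normForm a b c d < 1 := by
  refine goldenNorm_lt_one_of_mul_pos
    (by nlinarith [sq_nonneg a, sq_nonneg b, sq_nonneg c, sq_nonneg d]) ?_
  have hw : 0 < a * (2 * b - a) + c * (2 * d - c) := by nlinarith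
  have hv : 0 < b * (2 * a + b) + d * (2 * c + d) := by nlinarith
  nlinarith

lemma normForm_lt_one_of_neg {a b c d : ℚ} (ha : a < 0) (hb : 0 < b) (hab : b < -2 * a)
    (hc : c < 0) (hd : 0 < d) (hcd : d < -2 * c) (h : a ^ 2 + b ^ 2 + c ^ 2 + d ^ 2 ≤ 1) :
    normForm a b c d < 1 := by
  refine goldenNorm_lt_one_of_mul_pos
    (by nlinarith [sq_nonneg a, sq_nonneg b, sq_nonneg c, sq_nonneg d]) ?_
  have hw : a * (2 * b - a) + c * (2 * d - c) < 0 := by nlinarith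
  have hv : b * (2 * a + b) + d * (2 * c + d) < 0 := by nlinarith
  nlinarith

lemma normForm_lt_one_of_mixed {a b c e : ℚ} (ha : 3 / 8 ≤ a) (ha' : a ≤ 1 / 2) (hb : 3 / 8 ≤ b)
    (hb' : b ≤ 1 / 2) (hc : -(1 / 2) ≤ c) (hc' : c ≤ -(3 / 8)) (he : -(5 / 8) ≤ e)
    (he' : e ≤ -(1 / 2)) : normForm a b c e < 1 := by
  refine goldenNorm_lt_one_of_le (by positivity) (by nlinarith) ?_
  nlinarith [mul_le_mul ha (by linarith : 1/4 ≤ 2 * b - a) (by norm_num) (by linarith),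
    mul_le_mul (by linarith : 3/8 ≤ -c) (by linarith : 1/2 ≤ c - 2 * e) (by norm_num) (by linarith)]

def NormApproximable (a b c d : ℚ) : Prop :=
  ∃ m n p q : ℤ, normForm (a - m) (b - n) (c - p) (d - q) < 1

namespace NormApproximable

lemma of_neg_left {a b c d : ℚ} (h : NormApproximable (-a) (-b) c d) :
    NormApproximable a b c d := by
  obtain ⟨m, n, p, q, h⟩ := h
  refine ⟨-m, -n, p, q, ?_⟩
  rw [← normForm_neg_neg_left]
  convert h using 2 <;> push_cast <;> ring

lemma of_neg_right {a b c d : ℚ} (h : NormApproximable a b (-c) (-d)) :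
    NormApproximable a b c d := by
  obtain ⟨m, n, p, q, h⟩ := h
  refine ⟨m, n, -p, -q, ?_⟩
  rw [← normForm_neg_neg_right]
  convert h using 2 <;> push_cast <;> ring

lemma of_sub_int {a b c d : ℚ} (m n p q : ℤ)
    (h : NormApproximable (a - m) (b - n) (c - p) (d - q)) : NormApproximable a b c d := by
  obtain ⟨m', n', p', q', h⟩ := h
  refine ⟨m + m', n + n', p + p', q + q', ?_⟩
  convert h using 2 <;> push_cast <;> ring

lemma of_abs_le_of_nonneg {a b c d : ℚ} (ha : |a| ≤ 1 / 2) (hb : |b| ≤ 1 / 2) (hc : |c| ≤ 1 / 2)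
    (hd : |d| ≤ 1 / 2) (hb₀ : 0 ≤ b) (hd₀ : 0 ≤ d) : NormApproximable a b c d := by
  rw [abs_le] at ha hb hc hd
  by_cases hsmall : |a| < 3 / 8 ∨ b < 3 / 8 ∨ |c| < 3 / 8 ∨ d < 3 / 8
  · refine ⟨0, 0, 0, 0, ?_⟩
    simp only [Int.cast_zero, sub_zero]
    apply normForm_lt_one_of_sum_sq_lt
    have := sq_abs a; have := sq_abs c
    rcases hsmall with h | h | h | h <;>
      nlinarith [abs_nonneg a, abs_nonneg c, abs_le.2 ha, abs_le.2 hc]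
  simp only [not_or, not_lt] at hsmall
  obtain ⟨ha', hb', hc', hd'⟩ := hsmall
  rcases le_or_gt 0 a with ha₀ | ha₀ <;> rcases le_or_gt 0 c with hc₀ | hc₀
  · refine ⟨0, 0, 0, 0, ?_⟩
    simp only [Int.cast_zero, sub_zero]
    rw [abs_of_nonneg ha₀] at ha'; rw [abs_of_nonneg hc₀] at hc'
    exact normForm_lt_one_of_pos (by linarith) (by linarith) (by linarith) (by linarith)
      (by nlinarith)
  · refine ⟨0, 0, 0, 1, ?_⟩
    simp only [Int.cast_zero, Int.cast_one, sub_zero]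
    rw [abs_of_nonneg ha₀] at ha'; rw [abs_of_neg hc₀] at hc'
    exact normForm_lt_one_of_mixed ha' ha.2 hb' hb.2 hc.1 (by linarith) (by linarith) (by linarith)
  · refine ⟨0, 1, 0, 0, ?_⟩
    simp only [Int.cast_zero, Int.cast_one, sub_zero]
    rw [abs_of_neg ha₀] at ha'; rw [abs_of_nonneg hc₀] at hc'
    rw [← normForm_swap]
    exact normForm_lt_one_of_mixed hc' hc.2 hd' hd.2 ha.1 (by linarith) (by linarith) (by linarith)
  · refine ⟨0, 0, 0, 0, ?_⟩
    simp only [Int.cast_zero, sub_zero]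
    rw [abs_of_neg ha₀] at ha'; rw [abs_of_neg hc₀] at hc'
    exact normForm_lt_one_of_neg ha₀ (by linarith) (by linarith) hc₀ (by linarith) (by linarith)
      (by nlinarith)

lemma of_abs_le {a b c d : ℚ} (ha : |a| ≤ 1 / 2) (hb : |b| ≤ 1 / 2) (hc : |c| ≤ 1 / 2)
    (hd : |d| ≤ 1 / 2) : NormApproximable a b c d := by
  rcases le_or_gt 0 b with hb₀ | hb₀
  · rcases le_or_gt 0 d with hd₀ | hd₀
    · exact of_abs_le_of_nonneg ha hb hc hd hb₀ hd₀
    · exact of_neg_right <|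
        of_abs_le_of_nonneg ha hb (by rwa [abs_neg]) (by rwa [abs_neg]) hb₀ (by linarith)
  · rcases le_or_gt 0 d with hd₀ | hd₀
    · exact of_neg_left <|
        of_abs_le_of_nonneg (by rwa [abs_neg]) (by rwa [abs_neg]) hc hd (by linarith) hd₀
    · exact of_neg_left <| of_neg_right <| of_abs_le_of_nonneg (by rwa [abs_neg])
        (by rwa [abs_neg]) (by rwa [abs_neg]) (by rwa [abs_neg]) (by linarith) (by linarith)

end NormApproximable

theorem normApproximable (a b c d : ℚ) : NormApproximable a b c d :=
  .of_sub_int (round a) (round b) (round c) (round d) <|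
    .of_abs_le (abs_sub_round a) (abs_sub_round b) (abs_sub_round c) (abs_sub_round d)

lemma coe_iK : (iK : ℂ) = I := rfl

lemma coe_phiK : (phiK : ℂ) = (φ : ℂ) := by
  rw [goldenRatio]; push_cast; rfl

lemma iK_mul_self : iK * iK = -1 :=
  Subtype.ext <| by push_cast [coe_iK]; exact I_mul_I

lemma phiK_mul_self : phiK * phiK = phiK + 1 :=
  Subtype.ext <| by
    rw [IntermediateField.coe_mul, IntermediateField.coe_add, IntermediateField.coe_one, coe_phiK]
    exact_mod_cast (sq φ).symm.trans goldenRatio_sq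

lemma sqrt5K_eq : sqrt5K = 2 * phiK - 1 := by
  rw [phiK]; ring

noncomputable def basisVec : Fin 4 → K := ![1, phiK, iK, iK * phiK]

lemma basisVec_mem_Ziphi (i : Fin 4) : basisVec i ∈ Ziphi := by
  have hi : iK ∈ Ziphi := Subring.subset_closure (by simp)
  have hφ : phiK ∈ Ziphi := Subring.subset_closure (by simp)
  fin_cases i
  exacts [one_mem _, hφ, hi, mul_mem hi hφ]

lemma sum_intCast_smul_basisVec_mem_Ziphi (m : Fin 4 → ℤ) :
    ∑ i, (m i : ℚ) • basisVec i ∈ Ziphi :=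
  sum_mem fun i _ => by
    rw [Int.cast_smul_eq_zsmul]; exact zsmul_mem (basisVec_mem_Ziphi i) _

def mulMatrix (g : Fin 4 → ℚ) : Matrix (Fin 4) (Fin 4) ℚ :=
  !![g 0, g 1, -g 2, -g 3;
     g 1, g 0 + g 1, -g 3, -g 2 - g 3;
     g 2, g 3, g 0, g 1;
     g 3, g 2 + g 3, g 1, g 0 + g 1]

lemma sum_smul_basisVec_mul (g : Fin 4 → ℚ) (j : Fin 4) :
    (∑ i, g i • basisVec i) * basisVec j = ∑ i, mulMatrix g i j • basisVec i := by
  simp only [Fin.sum_univ_four, Algebra.smul_def]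
  fin_cases j <;> simp only [Fin.isValue, eq_ratCast, basisVec, Matrix.cons_val_zero, mul_one,
    Matrix.cons_val_one, Matrix.cons_val, Fin.zero_eta, Fin.mk_one, Fin.reduceFinMk, mulMatrix,
    Matrix.of_apply, Matrix.cons_val', Matrix.cons_val_fin_one, Rat.cast_neg, Rat.cast_sub,
    Rat.cast_add, neg_mul]
  · linear_combination ((g 1 : K) + g 3 * iK) * phiK_mul_self
  · linear_combination ((g 2 : K) + g 3 * phiK) * iK_mul_self
  · linear_combination ((g 1 : K) * iK + g 3 * iK * iK) * phiK_mul_self +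
      ((g 2 : K) * phiK + g 3 * (phiK + 1)) * iK_mul_self

lemma coe_sum_smul_basisVec (g : Fin 4 → ℚ) :
    ((∑ i, g i • basisVec i : K) : ℂ) =
      ((g 0 + g 1 * φ : ℝ) : ℂ) + ((g 2 + g 3 * φ : ℝ) : ℂ) * I := by
  simp only [Fin.sum_univ_four, basisVec]
  push_cast [Rat.smul_def, coe_iK, coe_phiK]
  ring

lemma K_toSubalgebra : K.toSubalgebra = Algebra.adjoin ℚ {I, (√5 : ℂ)} := by
  refine IntermediateField.adjoin_toSubalgebra_of_isAlgebraic ?_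
  rintro _ (rfl | rfl)
  · exact IsAlgebraic.of_pow two_pos (by rw [I_sq]; exact isAlgebraic_one.neg)
  · exact IsAlgebraic.of_pow two_pos (by
      rw [← ofReal_pow, Real.sq_sqrt (by norm_num)]; exact_mod_cast isAlgebraic_natCast 5)

lemma eq_zero_of_add_mul_goldenRatio_eq_zero {a b : ℚ} (h : (a : ℝ) + b * φ = 0) :
    a = 0 ∧ b = 0 := by
  obtain rfl : b = 0 := by
    by_contra hb
    refine goldenRatio_irrational.ne_rat (-a / b) ?_
    rw [Rat.cast_div, Rat.cast_neg, eq_div_iff (by exact_mod_cast hb)]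
    linarith
  simpa using h

lemma linearIndependent_basisVec : LinearIndependent ℚ basisVec := by
  rw [Fintype.linearIndependent_iff]
  intro g hg
  have h := congrArg ((↑) : K → ℂ) hg
  rw [coe_sum_smul_basisVec, IntermediateField.coe_zero] at h
  obtain ⟨h0, h1⟩ := eq_zero_of_add_mul_goldenRatio_eq_zero (by simpa using congrArg re h)
  obtain ⟨h2, h3⟩ := eq_zero_of_add_mul_goldenRatio_eq_zero (by simpa using congrArg im h)
  intro i
  fin_cases i <;> assumption

lemma span_basisVec : Submodule.span ℚ (Set.range basisVec) = ⊤ := by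
  set S := Submodule.span ℚ (Set.range basisVec)
  have hmem (i : Fin 4) : basisVec i ∈ S := Submodule.subset_span ⟨i, rfl⟩
  have hmul (x y : K) (hx : x ∈ S) (hy : y ∈ S) : x * y ∈ S := by
    obtain ⟨g, rfl⟩ := (Submodule.mem_span_range_iff_exists_fun ℚ).1 hx
    obtain ⟨h, rfl⟩ := (Submodule.mem_span_range_iff_exists_fun ℚ).1 hy
    simp only [Finset.mul_sum, mul_smul_comm, sum_smul_basisVec_mul]
    exact sum_mem fun j _ => S.smul_mem _ (sum_mem fun i _ => S.smul_mem _ (hmem i))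
  let A : Subalgebra ℚ K := S.toSubalgebra (hmem 0) hmul
  have hle : Algebra.adjoin ℚ {I, (√5 : ℂ)} ≤ A.map K.val := by
    refine Algebra.adjoin_le ?_
    rintro _ (rfl | rfl)
    · exact ⟨iK, hmem 2, rfl⟩
    · refine ⟨sqrt5K, ?_, rfl⟩
      rw [sqrt5K_eq]
      exact A.sub_mem (A.mul_mem (ofNat_mem A 2) (hmem 1)) A.one_mem
  refine eq_top_iff.2 fun x _ => ?_
  obtain ⟨y, hy, hyx⟩ := hle (K_toSubalgebra ▸ x.2 : (x : ℂ) ∈ Algebra.adjoin ℚ {I, (√5 : ℂ)})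
  rwa [← Subtype.ext hyx]

noncomputable def basisK : Module.Basis (Fin 4) ℚ K :=
  .mk linearIndependent_basisVec span_basisVec.ge

lemma leftMulMatrix_basisK (g : Fin 4 → ℚ) :
    Algebra.leftMulMatrix basisK (∑ i, g i • basisVec i) = mulMatrix g := by
  have hb : ⇑basisK = basisVec := funext (Module.Basis.mk_apply _ _)
  ext i j
  rw [Algebra.leftMulMatrix_eq_repr_mul, hb, sum_smul_basisVec_mul, ← hb, basisK.repr_sum_self]

lemma det_mulMatrix (g : Fin 4 → ℚ) : (mulMatrix g).det = normForm (g 0) (g 1) (g 2) (g 3) := by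
  rw [Matrix.det_succ_row_zero, Fin.sum_univ_four]
  simp only [Matrix.det_fin_three, Matrix.submatrix_apply, Fin.succAbove, Fin.reduceCastSucc,
    Fin.reduceSucc, Fin.reduceLT, Fin.isValue, ↓reduceIte, mulMatrix, Matrix.of_apply,
    Matrix.cons_val, Matrix.cons_val_zero, Matrix.cons_val_one, Fin.coe_ofNat_eq_mod, normForm,
    goldenNorm]
  ring

lemma norm_sum_smul_basisVec (g : Fin 4 → ℚ) :
    Algebra.norm ℚ (∑ i, g i • basisVec i) = normForm (g 0) (g 1) (g 2) (g 3) := by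
  rw [Algebra.norm_eq_matrix_det basisK, leftMulMatrix_basisK, det_mulMatrix]

noncomputable instance : Module.Finite ℚ K := .of_basis basisK

lemma exists_sum_smul_basisVec (α : K) : ∃ g : Fin 4 → ℚ, ∑ i, g i • basisVec i = α :=
  (Submodule.mem_span_range_iff_exists_fun ℚ).1 (span_basisVec ▸ Submodule.mem_top)

theorem exists_mem_Ziphi_abs_norm_sub_lt_one (α : K) :
    ∃ β ∈ Ziphi, |Algebra.norm ℚ (α - β)| < 1 := by
  obtain ⟨g, rfl⟩ := exists_sum_smul_basisVec α
  obtain ⟨m, n, p, q, hlt⟩ := normApproximable (g 0) (g 1) (g 2) (g 3)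
  refine ⟨_, sum_intCast_smul_basisVec_mem_Ziphi ![m, n, p, q], ?_⟩
  rw [← Finset.sum_sub_distrib]
  simp_rw [← sub_smul]
  rw [norm_sum_smul_basisVec, abs_of_nonneg (normForm_nonneg _ _ _ _)]
  simpa using hlt

/-- ℤ[i,φ] is norm-Euclidean: every element of K is within norm-distance 1 of ℤ[i,φ];
in particular ℤ[i,φ] is a Euclidean domain with respect to |N_{K/ℚ}|. -/
theorem stmt1 :
    (∀ α : K, ∃ β ∈ Ziphi, |Algebra.norm ℚ (α - β)| < 1) ∧
    (∀ a b : K, a ∈ Ziphi → b ∈ Ziphi → b ≠ 0 →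
      ∃ q ∈ Ziphi, ∃ r ∈ Ziphi,
        a = b * q + r ∧ |Algebra.norm ℚ r| < |Algebra.norm ℚ b|) := by
  refine ⟨exists_mem_Ziphi_abs_norm_sub_lt_one, fun a b ha hb hb0 => ?_⟩
  obtain ⟨q, hq, hlt⟩ := exists_mem_Ziphi_abs_norm_sub_lt_one (a / b)
  refine ⟨q, hq, a - b * q, sub_mem ha (mul_mem hb hq), by ring, ?_⟩
  have hN : 0 < |Algebra.norm ℚ b| := abs_pos.2 (Algebra.norm_ne_zero_iff.2 hb0)
  calc |Algebra.norm ℚ (a - b * q)| = |Algebra.norm ℚ b| * |Algebra.norm ℚ (a / b - q)| := by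
        rw [← abs_mul, ← map_mul, mul_sub, mul_div_cancel₀ a hb0]
    _ < |Algebra.norm ℚ b| := mul_lt_of_lt_one_right hN hlt
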